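/- Suppose a group G acts on a tree T, scl vanishes on all elliptic elements of G, g ∈ G is hyperbolic, and there exists h ∈ G such that h maps the axis of g to itself reversing orientation (equivalently, hgh⁻¹ acts on the axis of g as a translation of the same length in the opposite direction, so gⁿhgⁿh⁻¹ is elliptic for all n). Then scl(g) = 0. -/

import Mathlib

open scoped ENNReal commutatorElement

set_option linter.unusedVariables false

/-- `g` is a product of `n` commutators. -/
def IsProdCommutators {G : Type*} [Group G] (g : G) (n : ℕ) : Prop :=
  ∃ a b : Fin n → G, g = (List.ofFn (fun i => ⁅a i, b i⁆)).prod

/-- Commutator length, valued in `ℝ≥0∞` (`∞` if `g` is not a product of commutators). -/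
noncomputable def cl {G : Type*} [Group G] (g : G) : ℝ≥0∞ :=
  sInf ((fun n : ℕ => (n : ℝ≥0∞)) '' {n | IsProdCommutators g n})

/-- Stable commutator length: the limit (= infimum, by subadditivity) of `cl(gⁿ)/n`. -/
noncomputable def scl {G : Type*} [Group G] (g : G) : ℝ≥0∞ :=
  ⨅ n : ℕ+, cl (g ^ (n : ℕ)) / (n : ℕ+)

variable {V : Type*}

/-- A group `G` acts on the simplicial tree `T` by graph automorphisms, without
inversions. -/
def IsTreeAction (T : SimpleGraph V) (G : Type*) [Group G] [MulAction G V] : Prop :=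
  T.IsTree ∧ (∀ (g : G) (u v : V), T.Adj u v → T.Adj (g • u) (g • v)) ∧
    (∀ (g : G) (u v : V), T.Adj u v → ¬(g • u = v ∧ g • v = u))

/-- `w` lies on the geodesic segment from `u` to `v`. -/
def OnSeg (T : SimpleGraph V) (u w v : V) : Prop :=
  T.dist u w + T.dist w v = T.dist u v

/-- `g` is elliptic: it fixes a vertex of `T`. -/
def Elliptic (T : SimpleGraph V) {G : Type*} [Group G] [MulAction G V] (g : G) : Prop :=
  ∃ v : V, g • v = v

/-- The translation length of `g`: the minimal displacement of a vertex. -/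
noncomputable def transLen (T : SimpleGraph V) {G : Type*} [Group G] [MulAction G V]
    (g : G) : ℕ :=
  sInf {n : ℕ | ∃ v : V, T.dist v (g • v) = n}

/-- The characteristic subtree (the axis, for hyperbolic `g`): the set of vertices of
minimal displacement. -/
def Axis (T : SimpleGraph V) {G : Type*} [Group G] [MulAction G V] (g : G) : Set V :=
  {v : V | T.dist v (g • v) = transLen T g}

/-- For `p, q` on the axis of a hyperbolic `g`: `q` lies (weakly) in the positive
`g`-direction from `p`. -/
def Ahead (T : SimpleGraph V) {G : Type*} [Group G] [MulAction G V] (g : G)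
    (p q : V) : Prop :=
  T.dist p (g • q) = T.dist p q + transLen T g

/-!
If `h` reverses the axis of `g` and `u` lies on the axis, then `g • h • g • u = h • u`: both
points lie on the geodesic from `h • g • u` to `g • h • u`, of length twice the translation
length `L`, at distance `L` from its start, and in a tree such a point is unique. Iterating,
`h • gⁿ • u = g⁻ⁿ • h • u`, so `aₙ = gⁿ h gⁿ h⁻¹` fixes `h • u` and `scl aₙ = 0`.

Algebraically `g²ⁿ = aₙ ⁅h, g⁻ⁿ⁆`, and `(a c)ᵐ` is `aᵐ cᵐ` up to `m` commutators, so choosing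
`m` with `cl (aₙᵐ) ≤ m` gives `scl (g²ⁿ) ≤ 3`. Since `k * scl g ≤ scl (gᵏ)`, `scl g = 0`.
-/

open Filter

section CommutatorLength

variable {G : Type*} [Group G]

theorem isProdCommutators_iff_exists_list {g : G} {n : ℕ} :
    IsProdCommutators g n ↔
      ∃ l : List (G × G), l.length = n ∧ g = (l.map fun p => ⁅p.1, p.2⁆).prod := by
  constructor
  · rintro ⟨a, b, rfl⟩
    exact ⟨List.ofFn fun i => (a i, b i), by simp, by simp [List.map_ofFn, Function.comp_def]⟩
  · rintro ⟨l, rfl, rfl⟩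
    exact ⟨fun i => l[i].1, fun i => l[i].2,
      congrArg List.prod (l.ofFn_getElem_eq_map fun p => ⁅p.1, p.2⁆).symm⟩

theorem isProdCommutators_one : IsProdCommutators (1 : G) 0 :=
  ⟨Fin.elim0, Fin.elim0, rfl⟩

theorem isProdCommutators_commutator (a b : G) : IsProdCommutators ⁅a, b⁆ 1 :=
  ⟨fun _ => a, fun _ => b, by simp⟩

theorem IsProdCommutators.mul {x y : G} {p q : ℕ} (hx : IsProdCommutators x p)
    (hy : IsProdCommutators y q) : IsProdCommutators (x * y) (p + q) := by
  rw [isProdCommutators_iff_exists_list] at *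
  obtain ⟨l, rfl, rfl⟩ := hx
  obtain ⟨l', rfl, rfl⟩ := hy
  exact ⟨l ++ l', List.length_append, by simp⟩

theorem cl_eq_iInf (g : G) : cl g = ⨅ n : {n // IsProdCommutators g n}, ((n : ℕ) : ℝ≥0∞) :=
  sInf_image'

theorem cl_le_of_isProdCommutators {g : G} {n : ℕ} (h : IsProdCommutators g n) : cl g ≤ n :=
  sInf_le ⟨n, h, rfl⟩

@[simp]
theorem cl_one : cl (1 : G) = 0 :=
  nonpos_iff_eq_zero.1 <| by simpa using cl_le_of_isProdCommutators isProdCommutators_one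

theorem cl_commutator_le (a b : G) : cl ⁅a, b⁆ ≤ 1 := by
  simpa using cl_le_of_isProdCommutators (isProdCommutators_commutator a b)

theorem cl_mul_le (x y : G) : cl (x * y) ≤ cl x + cl y := by
  rw [cl_eq_iInf x, cl_eq_iInf y]
  refine ENNReal.le_iInf_add_iInf fun p q => ?_
  exact_mod_cast cl_le_of_isProdCommutators (p.2.mul q.2)

theorem cl_pow_le (x : G) (m : ℕ) : cl (x ^ m) ≤ m * cl x := by
  induction m with
  | zero => simp
  | succ m ih =>
    calc cl (x ^ (m + 1)) ≤ cl (x ^ m) + cl x := pow_succ x m ▸ cl_mul_le _ _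
      _ ≤ m * cl x + cl x := by gcongr
      _ = (m + 1 : ℕ) * cl x := by push_cast; ring

theorem exists_mul_pow_eq_pow_mul_mul_pow (a c : G) (m : ℕ) :
    ∃ d : G, cl d ≤ m ∧ (a * c) ^ m = a ^ m * d * c ^ m := by
  induction m with
  | zero => exact ⟨1, by simp, by simp⟩
  | succ m ih =>
    obtain ⟨d, hd, hdecomp⟩ := ih
    -- `a^m d c^m (a c) = a^(m+1) (a⁻¹ d c^m a c^(-m)) c^(m+1)`
    refine ⟨⁅a⁻¹, d * c ^ m⁆ * d, ?_, ?_⟩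
    · calc cl (⁅a⁻¹, d * c ^ m⁆ * d) ≤ cl ⁅a⁻¹, d * c ^ m⁆ + cl d := cl_mul_le _ _
        _ ≤ 1 + m := by gcongr; exact cl_commutator_le _ _
        _ = (m + 1 : ℕ) := by push_cast; ring
    · rw [pow_succ, hdecomp, pow_succ, pow_succ, commutatorElement_def]
      simp only [mul_assoc, mul_inv_rev, inv_inv, inv_mul_cancel_left, mul_inv_cancel_left]

theorem cl_mul_pow_le (a c : G) (m : ℕ) : cl ((a * c) ^ m) ≤ cl (a ^ m) + m + cl (c ^ m) := by
  obtain ⟨d, hd, hdecomp⟩ := exists_mul_pow_eq_pow_mul_mul_pow a c m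
  rw [hdecomp]
  calc cl (a ^ m * d * c ^ m) ≤ cl (a ^ m * d) + cl (c ^ m) := cl_mul_le _ _
    _ ≤ cl (a ^ m) + cl d + cl (c ^ m) := by gcongr; exact cl_mul_le _ _
    _ ≤ cl (a ^ m) + m + cl (c ^ m) := by gcongr

end CommutatorLength

section StableCommutatorLength

variable {G : Type*} [Group G]

theorem scl_le_cl_pow_div (g : G) (n : ℕ+) : scl g ≤ cl (g ^ (n : ℕ)) / (n : ℕ) :=
  iInf_le _ n

theorem exists_cl_pow_le_of_scl_eq_zero {a : G} (ha : scl a = 0) :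
    ∃ m : ℕ+, cl (a ^ (m : ℕ)) ≤ (m : ℕ) := by
  obtain ⟨m, hm⟩ := iInf_lt_iff.1 (ha.trans_lt zero_lt_one)
  rw [ENNReal.div_lt_iff (by simp) (by simp), one_mul] at hm
  exact ⟨m, hm.le⟩

theorem scl_mul_commutator_le {a : G} (ha : scl a = 0) (x y : G) : scl (a * ⁅x, y⁆) ≤ 3 := by
  obtain ⟨m, hm⟩ := exists_cl_pow_le_of_scl_eq_zero ha
  have hm₀ : ((m : ℕ) : ℝ≥0∞) ≠ 0 := by simp
  calc scl (a * ⁅x, y⁆) ≤ cl ((a * ⁅x, y⁆) ^ (m : ℕ)) / (m : ℕ) := scl_le_cl_pow_div _ m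
    _ ≤ 3 * (m : ℕ) / (m : ℕ) := by
      gcongr
      calc cl ((a * ⁅x, y⁆) ^ (m : ℕ))
          ≤ cl (a ^ (m : ℕ)) + (m : ℕ) + cl (⁅x, y⁆ ^ (m : ℕ)) := cl_mul_pow_le _ _ _
        _ ≤ (m : ℕ) + (m : ℕ) + (m : ℕ) * 1 := by
          gcongr
          exact (cl_pow_le _ _).trans (by gcongr; exact cl_commutator_le x y)
        _ = 3 * (m : ℕ) := by ring
    _ = 3 := ENNReal.mul_div_cancel_right hm₀ (by simp)

theorem nat_mul_scl_le_scl_pow (g : G) (k : ℕ) : k * scl g ≤ scl (g ^ k) := by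
  rcases Nat.eq_zero_or_pos k with rfl | hk
  · simp
  refine le_iInf fun n => ?_
  have hk₀ : (k : ℝ≥0∞) ≠ 0 := by simp [hk.ne']
  calc k * scl g ≤ k * (cl (g ^ (k * n : ℕ)) / (k * n : ℕ)) :=
        by gcongr; exact scl_le_cl_pow_div g ⟨k * n, by positivity⟩
    _ = cl ((g ^ k) ^ (n : ℕ)) / (n : ℕ) := by
      rw [← pow_mul, ← mul_div_assoc, Nat.cast_mul, ENNReal.mul_div_mul_left _ _ hk₀ (by simp)]

theorem scl_eq_zero_of_frequently_scl_pow_le {g : G} {C : ℝ≥0∞} (hC : C ≠ ⊤)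
    (h : ∃ᶠ k in atTop, scl (g ^ k) ≤ C) : scl g = 0 := by
  by_contra hg
  obtain ⟨n, hn⟩ := ENNReal.exists_nat_mul_gt hg hC
  obtain ⟨k, hnk, hk⟩ := frequently_atTop.1 h n
  have : (n : ℝ≥0∞) * scl g ≤ k * scl g := by gcongr
  exact (hn.trans_le (this.trans ((nat_mul_scl_le_scl_pow g k).trans hk))).false

theorem scl_eq_zero_of_forall_scl_pow_mul_conj_pow_eq_zero (g h : G)
    (hscl : ∀ n : ℕ, scl (g ^ n * h * g ^ n * h⁻¹) = 0) : scl g = 0 := by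
  refine scl_eq_zero_of_frequently_scl_pow_le (C := 3) ENNReal.ofNat_ne_top
    (frequently_atTop.2 fun n => ⟨2 * n, by omega, ?_⟩)
  have : g ^ (2 * n) = g ^ n * h * g ^ n * h⁻¹ * ⁅h, (g ^ n)⁻¹⁆ := by
    rw [commutatorElement_def, two_mul, pow_add]
    group
  rw [this]
  exact scl_mul_commutator_le (hscl n) _ _

end StableCommutatorLength

namespace SimpleGraph

variable {T : SimpleGraph V}

theorem IsTree.getVert_dist_eq_of_onSeg (hT : T.IsTree) {x c z : V} (hc : OnSeg T x c z)
    {p : T.Walk x z} (hp : p.IsPath) : p.getVert (T.dist x c) = c := by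
  obtain ⟨p₁, hp₁⟩ := hT.connected.exists_walk_length_eq_dist x c
  obtain ⟨p₂, hp₂⟩ := hT.connected.exists_walk_length_eq_dist c z
  have hpath : (p₁.append p₂).IsPath :=
    Walk.isPath_of_length_eq_dist _ (by rw [Walk.length_append, hp₁, hp₂, hc])
  rw [(hT.existsUnique_path x z).unique hp hpath, Walk.getVert_append, ← hp₁]
  simp

theorem IsTree.eq_of_onSeg_of_dist_eq (hT : T.IsTree) {x z a b : V} (ha : OnSeg T x a z)
    (hb : OnSeg T x b z) (hd : T.dist x a = T.dist x b) : a = b := by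
  obtain ⟨p, hp, -⟩ := hT.existsUnique_path x z
  rw [← hT.getVert_dist_eq_of_onSeg ha hp, ← hT.getVert_dist_eq_of_onSeg hb hp, hd]

theorem Connected.dist_smul {G : Type*} [Group G] [MulAction G V] (hconn : T.Connected)
    (hadj : ∀ (k : G) (u v : V), T.Adj u v → T.Adj (k • u) (k • v)) (k : G) (u v : V) :
    T.dist (k • u) (k • v) = T.dist u v := by
  have dist_smul_le (k : G) (u v : V) : T.dist (k • u) (k • v) ≤ T.dist u v := by
    obtain ⟨p, hp⟩ := hconn.exists_walk_length_eq_dist u v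
    let f : T →g T := ⟨(k • ·), hadj k _ _⟩
    have := dist_le (p.map f)
    rwa [Walk.length_map, hp] at this
  refine (dist_smul_le k u v).antisymm ?_
  simpa using dist_smul_le k⁻¹ (k • u) (k • v)

end SimpleGraph

section Axis

variable {T : SimpleGraph V} {G : Type*} [Group G] [MulAction G V]

def ReversesAxis (T : SimpleGraph V) (g h : G) : Prop :=
  ∀ v ∈ Axis T g, h • v ∈ Axis T g ∧ Ahead T g (h • (g • v)) (h • v)

theorem axis_nonempty [Nonempty V] (g : G) : (Axis T g).Nonempty :=
  Nat.sInf_mem (⟨_, Classical.arbitrary V, rfl⟩ : {n | ∃ v : V, T.dist v (g • v) = n}.Nonempty)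

theorem smul_mem_axis (hiso : ∀ (k : G) (u v : V), T.dist (k • u) (k • v) = T.dist u v)
    {g : G} {v : V} (hv : v ∈ Axis T g) : g • v ∈ Axis T g :=
  (hiso g v (g • v)).trans hv

theorem pow_smul_mem_axis (hiso : ∀ (k : G) (u v : V), T.dist (k • u) (k • v) = T.dist u v)
    {g : G} (k : ℕ) {v : V} (hv : v ∈ Axis T g) : (g ^ k) • v ∈ Axis T g := by
  induction k with
  | zero => simpa using hv
  | succ k ih => simpa only [pow_succ', mul_smul] using smul_mem_axis hiso ih

theorem smul_smul_smul_eq_of_reversesAxis (hT : T.IsTree)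
    (hiso : ∀ (k : G) (u v : V), T.dist (k • u) (k • v) = T.dist u v) {g h : G}
    (hrev : ReversesAxis T g h) {u : V} (hu : u ∈ Axis T g) : g • h • g • u = h • u := by
  obtain ⟨hgu, hahead⟩ := hrev u hu
  have hhgu : T.dist (h • g • u) (g • h • g • u) = transLen T g :=
    (hrev (g • u) (smul_mem_axis hiso hu)).1
  have hhu : T.dist (h • g • u) (h • u) = transLen T g := by
    rw [hiso, SimpleGraph.dist_comm]
    exact hu
  refine hT.eq_of_onSeg_of_dist_eq (x := h • g • u) (z := g • h • u) ?_ ?_ (hhgu.trans hhu.symm)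
  · rw [OnSeg, hhgu, hiso, hhu, hahead, hhu]
  · rw [OnSeg, hhu, hgu, hahead, hhu]

theorem smul_pow_smul_of_reversesAxis (hT : T.IsTree)
    (hiso : ∀ (k : G) (u v : V), T.dist (k • u) (k • v) = T.dist u v) {g h : G}
    (hrev : ReversesAxis T g h) (k : ℕ) {v : V} (hv : v ∈ Axis T g) :
    h • (g ^ k) • v = (g ^ k)⁻¹ • h • v := by
  induction k with
  | zero => simp
  | succ k ih =>
    have hstep : h • g • (g ^ k) • v = g⁻¹ • h • (g ^ k) • v := eq_inv_smul_iff.2 <|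
      smul_smul_smul_eq_of_reversesAxis hT hiso hrev (pow_smul_mem_axis hiso k hv)
    rw [pow_succ', mul_smul, hstep, ih, ← mul_smul, ← mul_inv_rev, ← pow_succ, pow_succ']

theorem elliptic_pow_mul_conj_pow (hT : T.IsTree)
    (hiso : ∀ (k : G) (u v : V), T.dist (k • u) (k • v) = T.dist u v) {g h : G}
    (hrev : ReversesAxis T g h) (hax : (Axis T g).Nonempty) (n : ℕ) :
    Elliptic T (g ^ n * h * g ^ n * h⁻¹) := by
  obtain ⟨w, hw⟩ := hax
  refine ⟨h • w, ?_⟩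
  simp only [mul_smul, inv_smul_smul, smul_pow_smul_of_reversesAxis hT hiso hrev n hw,
    smul_inv_smul]

end Axis

theorem scl_zero_of_axis_reversed_general {V : Type*} (T : SimpleGraph V) {G : Type*} [Group G]
    [MulAction G V] (hT : IsTreeAction T G)
    (hell : ∀ x : G, Elliptic T x → scl x = 0)
    (g : G) (h : G)
    (hrev : ∀ v ∈ Axis T g, h • v ∈ Axis T g ∧ Ahead T g (h • (g • v)) (h • v)) :
    scl g = 0 := by
  obtain ⟨hTree, hadj, -⟩ := hT
  have hiso := hTree.connected.dist_smul hadj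
  have : Nonempty V := hTree.connected.nonempty
  refine scl_eq_zero_of_forall_scl_pow_mul_conj_pow_eq_zero g h fun n => hell _ ?_
  exact elliptic_pow_mul_conj_pow hTree hiso hrev (axis_nonempty g) n

/-- If `scl` vanishes on elliptic elements, `g` is hyperbolic, and some `h` maps the axis
of `g` to itself reversing the orientation (so that `h g h⁻¹` translates along the axis of
`g` with the same length in the opposite direction), then `scl(g) = 0`. -/
theorem scl_zero_of_axis_reversed {V : Type*} (T : SimpleGraph V) {G : Type*} [Group G]
    [MulAction G V] (hT : IsTreeAction T G)
    (hell : ∀ x : G, Elliptic T x → scl x = 0)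
    (g : G) (hg : ¬ Elliptic T g) (h : G)
    (hrev : ∀ v ∈ Axis T g, h • v ∈ Axis T g ∧ Ahead T g (h • (g • v)) (h • v)) :
    scl g = 0 :=
  scl_zero_of_axis_reversed_general T hT hell g h hrev
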